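/- arXiv:2011.08439 — 3 statements merged into one kernel-verified Lean document; each statement's English description precedes it below -/
import Mathlib

section
/- Let d ≥ 1, t ≥ 1, n ≥ 1 be integers and let v : Fin n → (Fin d → ℍ) be d-tuples of quaternions, not all zero. Write c_t := (t+1)/Nat.choose(2d+t-1, t) and S := ∑_{ℓ} (∑_i normSq((v ℓ) i))^t. Then equality ∑_{j} ∑_{k} (normSq ⟨v j, v k⟩)^t = c_t · S² holds if and only if the generalized Bessel identity holds: for every x : Fin d → ℍ, ∑_{j} (normSq ⟨v j, x⟩)^t = c_t · S · ( ∑_i normSq(x i) )^t. -/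
/-!
Work with the Fischer inner product `⟪p, q⟫ = ∑ₘ m! pₘ qₘ` on real polynomials in the `4d` real
coordinates of `x ∈ ℍ^d`. Multiplication by `X s` is adjoint to `∂/∂X s`, so a sum of squares of
linear forms `∑_β ℓ_β²` is adjoint to the second-order operator `∑_a ∂_{c_a}²`; when the Gram matrix
`(c_a ⬝ᵥ b_β)` has orthogonal columns of square norm `ρ`, iterating this evaluates
`⟪(∑ ℓ_{c_a}²)^t, (∑ ℓ_{b_β}²)^t⟫` in closed form. Applied to `K_w(x) = |⟨w, x⟩|^{2t}` and
`N(x) = ‖x‖^{2t}` this gives `⟪K_u, K_w⟫ = κ |⟨u, w⟩|^{2t}`, `⟪N, K_w⟫ = κ ‖w‖^{2t}` and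
`⟪N, N⟫ = λ`, where `κ = fischerConst 4 t` and `λ = fischerConst (4 * d) t` satisfy
`c_t λ = κ`. For `F = ∑_j K_{v_j}` the hypothesis of the forward direction therefore says
`⟪N, F⟫² = ⟪N, N⟫ ⟪F, F⟫`: equality in Cauchy–Schwarz, so `F` is a multiple of `N`, and pairing
with `K_x` gives the Bessel identity. The converse is the Bessel identity at `x = v_k`, summed
over `k`.
-/

open MvPolynomial Quaternion

noncomputable section

theorem LinearMap.BilinForm.apply_mul_apply_eq_of_sq_eq {M : Type*} [AddCommGroup M] [Module ℝ M]
    (B : LinearMap.BilinForm ℝ M) (hs : ∀ x, 0 ≤ B x x) (hB : LinearMap.IsSymm B)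
    {x y : M} (h : B x y ^ 2 = B x x * B y y) (z : M) :
    B x x * B y z = B x y * B x z := by
  have hzero : B (B x y • x - B x x • y) (B x y • x - B x x • y) = 0 := by
    rw [apply_smul_sub_smul_sub_eq, ← hB.eq x y, RingHom.id_apply, ← sq, h, sub_self, mul_zero]
  have hker := LinearMap.congr_fun ((apply_apply_same_eq_zero_iff B hs hB).mp hzero) z
  simp only [map_sub, map_smul, LinearMap.sub_apply, LinearMap.smul_apply, smul_eq_mul,
    LinearMap.zero_apply] at hker
  linarith

lemma sum_single_dotProduct_mul {σ : Type*} [Fintype σ] [DecidableEq σ] (v w : σ → ℝ) :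
    ∑ s, (Pi.single s 1 ⬝ᵥ v) * (Pi.single s 1 ⬝ᵥ w) = v ⬝ᵥ w := by
  simp only [single_one_dotProduct]
  rfl

def fischerConst (m t : ℕ) : ℝ := ∏ j ∈ Finset.range t, ((j + 1) * (4 * j + 2 * m))

lemma fischerConst_pos {m : ℕ} (hm : 0 < m) (t : ℕ) : 0 < fischerConst m t :=
  Finset.prod_pos fun j _ => by positivity

lemma choose_mul_fischerConst {d : ℕ} (hd : 1 ≤ d) (t : ℕ) :
    ((t : ℝ) + 1) * fischerConst (4 * d) t = (2 * d + t - 1).choose t * fischerConst 4 t := by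
  induction t with
  | zero => simp [fischerConst]
  | succ t ih =>
    have hchoose : ((2 * d + t : ℕ) : ℝ) * (2 * d + t - 1).choose t
        = (2 * d + t).choose (t + 1) * (t + 1) := by
      have := Nat.add_one_mul_choose_eq (2 * d + t - 1) t
      rw [Nat.sub_add_cancel (by omega)] at this
      exact_mod_cast this
    rw [show 2 * d + (t + 1) - 1 = 2 * d + t by omega, fischerConst, fischerConst,
      Finset.prod_range_succ, Finset.prod_range_succ, ← fischerConst, ← fischerConst]
    push_cast at hchoose ⊢
    linear_combination (((t : ℝ) + 2) * (4 * t + 8 * d)) * ih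
      + 4 * ((t : ℝ) + 2) * fischerConst 4 t * hchoose

namespace MvPolynomial

variable {σ : Type*} [Fintype σ]

def fischerWeight (m : σ →₀ ℕ) : ℝ := ∏ s, ((m s).factorial : ℝ)

lemma fischerWeight_add_single [DecidableEq σ] (m : σ →₀ ℕ) (s : σ) :
    fischerWeight (m + Finsupp.single s 1) = fischerWeight m * (m s + 1) := by
  rw [fischerWeight, fischerWeight, ← Finset.mul_prod_erase _ _ (Finset.mem_univ s),
    ← Finset.mul_prod_erase _ _ (Finset.mem_univ s), Finset.prod_congr rfl fun x hx => by
      rw [Finsupp.add_apply, Finsupp.single_eq_of_ne (Finset.ne_of_mem_erase hx), add_zero]]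
  simp only [Finsupp.add_apply, Finsupp.single_eq_same, Nat.factorial_succ]
  push_cast
  ring

def fischer : LinearMap.BilinForm ℝ (MvPolynomial σ ℝ) :=
  (basisMonomials σ ℝ).constr ℝ fun m => fischerWeight m • lcoeff ℝ m

lemma fischer_apply (p q : MvPolynomial σ ℝ) :
    fischer p q = ∑ m ∈ p.support, fischerWeight m * coeff m p * coeff m q := by
  rw [fischer, Module.Basis.constr_apply, Finsupp.sum, LinearMap.sum_apply]
  refine Finset.sum_congr rfl fun m _ => ?_
  change (coeff m p • fischerWeight m • lcoeff ℝ m) q = _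
  simp only [LinearMap.smul_apply, lcoeff_apply, smul_eq_mul]
  ring

lemma fischer_monomial_monomial [DecidableEq σ] (m m' : σ →₀ ℕ) (a b : ℝ) :
    fischer (monomial m a) (monomial m' b) = if m = m' then fischerWeight m * a * b else 0 := by
  rw [fischer_apply]
  by_cases ha : a = 0
  · simp [ha]
  rw [support_monomial, if_neg ha, Finset.sum_singleton]
  by_cases h : m = m'
  · subst h; simp
  · simp [coeff_monomial, h, Ne.symm h]

lemma fischer_isSymm : LinearMap.IsSymm (fischer (σ := σ)) := by
  classical
  refine ⟨fun p q => ?_⟩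
  rw [RingHom.id_apply]
  induction p using MvPolynomial.induction_on' with
  | add p₁ p₂ h₁ h₂ => simp only [map_add, LinearMap.add_apply, h₁, h₂]
  | monomial m a =>
    induction q using MvPolynomial.induction_on' with
    | add q₁ q₂ h₁ h₂ => simp only [map_add, LinearMap.add_apply, h₁, h₂]
    | monomial m' b =>
      rw [fischer_monomial_monomial, fischer_monomial_monomial]
      by_cases h : m = m'
      · subst h; simp only [if_true]; ring
      · rw [if_neg h, if_neg (Ne.symm h)]

lemma fischer_self_nonneg (p : MvPolynomial σ ℝ) : 0 ≤ fischer p p := by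
  rw [fischer_apply]
  exact Finset.sum_nonneg fun m _ => by
    rw [mul_assoc]; exact mul_nonneg (by unfold fischerWeight; positivity) (mul_self_nonneg _)

lemma fischer_X_mul [DecidableEq σ] (s : σ) (p q : MvPolynomial σ ℝ) :
    fischer (X s * p) q = fischer p (pderiv s q) := by
  rw [fischer_apply, fischer_apply, support_X_mul, Finset.sum_map]
  refine Finset.sum_congr rfl fun m _ => ?_
  rw [addLeftEmbedding_apply, coeff_X_mul, coeff_pderiv, add_comm _ m, fischerWeight_add_single]
  ring

lemma fischer_one_C (a : ℝ) : fischer (1 : MvPolynomial σ ℝ) (C a) = a := by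
  classical
  rw [← C_1, C_apply, C_apply, fischer_monomial_monomial, if_pos rfl]
  simp [fischerWeight]

def linearForm (b : σ → ℝ) : MvPolynomial σ ℝ := ∑ s, b s • X s

def dirDeriv (c : σ → ℝ) : Derivation ℝ (MvPolynomial σ ℝ) (MvPolynomial σ ℝ) :=
  ∑ s, c s • pderiv s

lemma dirDeriv_apply (c : σ → ℝ) (p : MvPolynomial σ ℝ) :
    dirDeriv c p = ∑ s, c s • pderiv s p := by
  rw [dirDeriv, ← Derivation.coeFnAddMonoidHom_apply, map_sum, Finset.sum_apply]
  rfl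

lemma dirDeriv_linearForm [DecidableEq σ] (c b : σ → ℝ) :
    dirDeriv c (linearForm b) = C (c ⬝ᵥ b) := by
  simp [dirDeriv_apply, linearForm, pderiv_X, Pi.single_apply, dotProduct, smul_eq_C_mul,
    mul_comm]

lemma fischer_linearForm_mul [DecidableEq σ] (b : σ → ℝ) (p q : MvPolynomial σ ℝ) :
    fischer (linearForm b * p) q = fischer p (dirDeriv b q) := by
  simp [linearForm, dirDeriv_apply, Finset.sum_mul, fischer_X_mul]

section SumOfSquares

variable {ι ι' : Type*} [Fintype ι] [Fintype ι'] {c : ι → σ → ℝ}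

def sumSqLinearForms (b : ι → σ → ℝ) : MvPolynomial σ ℝ := ∑ β, linearForm (b β) ^ 2

def sumSqDirDerivs (c : ι → σ → ℝ) : Module.End ℝ (MvPolynomial σ ℝ) :=
  ∑ a, (dirDeriv (c a)).toLinearMap ^ 2

lemma sumSqDirDerivs_apply (p : MvPolynomial σ ℝ) :
    sumSqDirDerivs c p = ∑ a, dirDeriv (c a) (dirDeriv (c a) p) := by
  simp [sumSqDirDerivs, pow_two]

lemma sumSqDirDerivs_pow_succ {P : MvPolynomial σ ℝ} {e r : ℝ}
    (he : sumSqDirDerivs c P = C e) (hr : ∑ a, dirDeriv (c a) P ^ 2 = r • P) (n : ℕ) :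
    sumSqDirDerivs c (P ^ (n + 1)) = ((n + 1) * (n * r + e)) • P ^ n := by
  rcases n with _ | n
  · simp [he, smul_eq_C_mul]
  have hD : ∀ a, dirDeriv (c a) (dirDeriv (c a) (P ^ (n + 2)))
      = (n + 2 : ℝ) • (P ^ (n + 1) * dirDeriv (c a) (dirDeriv (c a) P))
        + ((n + 2) * (n + 1) : ℝ) • (P ^ n * dirDeriv (c a) P ^ 2) := by
    intro a
    simp only [Derivation.leibniz_pow, smul_eq_mul, map_nsmul]
    simp only [Derivation.leibniz, Derivation.leibniz_pow, smul_eq_mul, nsmul_eq_mul,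
      smul_eq_C_mul, C_mul, C_add, C_1, map_natCast, map_ofNat]
    push_cast
    ring
  rw [sumSqDirDerivs_apply]
  simp only [hD, Finset.sum_add_distrib, ← Finset.smul_sum, ← Finset.mul_sum,
    ← sumSqDirDerivs_apply, he, hr]
  simp only [smul_eq_C_mul, C_mul, C_add, C_1, map_natCast, map_ofNat, pow_succ]
  push_cast
  ring

lemma sumSqDirDerivs_pow_apply_pow {P : MvPolynomial σ ℝ} {e r : ℝ}
    (he : sumSqDirDerivs c P = C e) (hr : ∑ a, dirDeriv (c a) P ^ 2 = r • P) (t : ℕ) :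
    (sumSqDirDerivs c ^ t) (P ^ t) = C (∏ j ∈ Finset.range t, ((j + 1) * (j * r + e))) := by
  induction t with
  | zero => simp
  | succ t ih =>
    rw [pow_succ, Module.End.mul_apply, sumSqDirDerivs_pow_succ he hr, map_smul, ih,
      Finset.prod_range_succ, smul_eq_C_mul, ← C_mul, mul_comm]

variable [DecidableEq σ]

lemma fischer_sumSqLinearForms_mul (b : ι → σ → ℝ) (p q : MvPolynomial σ ℝ) :
    fischer (sumSqLinearForms b * p) q = fischer p (sumSqDirDerivs b q) := by
  simp only [sumSqLinearForms, Finset.sum_mul, map_sum, LinearMap.sum_apply, sumSqDirDerivs_apply,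
    pow_two, mul_assoc, fischer_linearForm_mul]

lemma fischer_sumSqLinearForms_pow_mul (b : ι → σ → ℝ) (k : ℕ)
    (p q : MvPolynomial σ ℝ) :
    fischer (sumSqLinearForms b ^ k * p) q = fischer p ((sumSqDirDerivs b ^ k) q) := by
  induction k generalizing p with
  | zero => simp
  | succ k ih =>
    rw [pow_succ, mul_assoc, ih, fischer_sumSqLinearForms_mul, pow_succ', Module.End.mul_apply]

lemma dirDeriv_sumSqLinearForms (u : σ → ℝ) (b : ι → σ → ℝ) :
    dirDeriv u (sumSqLinearForms b) = ∑ β, (2 * u ⬝ᵥ b β) • linearForm (b β) := by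
  simp only [sumSqLinearForms, map_sum, pow_two, Derivation.leibniz, dirDeriv_linearForm,
    smul_eq_mul, smul_eq_C_mul, map_mul, map_ofNat]
  exact Finset.sum_congr rfl fun β _ => by ring

variable [DecidableEq ι'] {b : ι' → σ → ℝ} {ρ : ℝ}

lemma sumSqDirDerivs_sumSqLinearForms
    (h : ∀ β β', ∑ a, (c a ⬝ᵥ b β) * (c a ⬝ᵥ b β') = if β = β' then ρ else 0) :
    sumSqDirDerivs c (sumSqLinearForms b) = C (2 * Fintype.card ι' * ρ) := by
  simp only [sumSqDirDerivs_apply, dirDeriv_sumSqLinearForms, map_sum, Derivation.map_smul,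
    dirDeriv_linearForm]
  simp only [smul_eq_C_mul, ← C_mul, ← map_sum]
  rw [Finset.sum_comm]
  simp only [mul_assoc, ← Finset.mul_sum, h, if_true, Finset.sum_const, Finset.card_univ,
    nsmul_eq_mul]

lemma sum_sq_dirDeriv_sumSqLinearForms
    (h : ∀ β β', ∑ a, (c a ⬝ᵥ b β) * (c a ⬝ᵥ b β') = if β = β' then ρ else 0) :
    ∑ a, dirDeriv (c a) (sumSqLinearForms b) ^ 2 = (4 * ρ) • sumSqLinearForms b := by
  have hterm : ∀ a β β',
      (2 * c a ⬝ᵥ b β) • linearForm (b β) * (2 * c a ⬝ᵥ b β') • linearForm (b β')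
        = (4 * ((c a ⬝ᵥ b β) * (c a ⬝ᵥ b β'))) • (linearForm (b β) * linearForm (b β')) := by
    intro a β β'
    rw [smul_mul_smul_comm]
    congr 1
    ring
  simp only [dirDeriv_sumSqLinearForms, pow_two, Finset.sum_mul_sum, hterm]
  rw [Finset.sum_comm]
  simp_rw [Finset.sum_comm (s := Finset.univ (α := ι)), ← Finset.sum_smul, ← Finset.mul_sum, h]
  simp [sumSqLinearForms, Finset.mul_sum, smul_eq_C_mul, pow_two]

lemma fischer_sumSqLinearForms_pow
    (h : ∀ β β', ∑ a, (c a ⬝ᵥ b β) * (c a ⬝ᵥ b β') = if β = β' then ρ else 0) (t : ℕ) :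
    fischer (sumSqLinearForms c ^ t) (sumSqLinearForms b ^ t)
      = ρ ^ t * fischerConst (Fintype.card ι') t := by
  have hρ : ρ ^ t = ∏ _j ∈ Finset.range t, ρ := by simp
  rw [← mul_one (sumSqLinearForms c ^ t), fischer_sumSqLinearForms_pow_mul,
    sumSqDirDerivs_pow_apply_pow (sumSqDirDerivs_sumSqLinearForms h)
      (sum_sq_dirDeriv_sumSqLinearForms h), fischer_one_C, fischerConst, hρ,
    ← Finset.prod_mul_distrib]
  exact Finset.prod_congr rfl fun j _ => by ring

end SumOfSquares

end MvPolynomial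

namespace Quaternion

def basisOneIJK : Module.Basis (Fin 4) ℝ (Quaternion ℝ) :=
  QuaternionAlgebra.basisOneIJK (-1) 0 (-1)

lemma basisOneIJK_repr (q : Quaternion ℝ) :
    ⇑(basisOneIJK.repr q) = ![q.re, q.imI, q.imJ, q.imK] := rfl

local notation "L" => Algebra.leftMulMatrix basisOneIJK

lemma leftMulMatrix_star (q : Quaternion ℝ) : L (star q) = (L q).transpose := by
  ext i j
  have hi : ![(basisOneIJK i).re, (basisOneIJK i).imI, (basisOneIJK i).imJ, (basisOneIJK i).imK]
      = Pi.single i 1 := by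
    rw [← basisOneIJK_repr, Module.Basis.repr_self, Finsupp.single_eq_pi_single]
  have hj : ![(basisOneIJK j).re, (basisOneIJK j).imI, (basisOneIJK j).imJ, (basisOneIJK j).imK]
      = Pi.single j 1 := by
    rw [← basisOneIJK_repr, Module.Basis.repr_self, Finsupp.single_eq_pi_single]
  rw [Matrix.transpose_apply, Algebra.leftMulMatrix_eq_repr_mul,
    Algebra.leftMulMatrix_eq_repr_mul, basisOneIJK_repr, basisOneIJK_repr]
  fin_cases i <;> fin_cases j <;>
    simp [funext_iff, Fin.forall_fin_succ, re_mul, imI_mul, imJ_mul, imK_mul] at hi hj ⊢ <;>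
    simp [hi, hj]

lemma leftMulMatrix_coe (r : ℝ) (α β : Fin 4) :
    L (r : Quaternion ℝ) α β = if α = β then r else 0 := by
  have h := congrArg (· α β) ((Algebra.leftMulMatrix basisOneIJK).commutes r)
  simpa [Matrix.algebraMap_matrix_apply, algebraMap_def] using h

lemma sum_leftMulMatrix_mul_leftMulMatrix (q : Quaternion ℝ) (β β' : Fin 4) :
    ∑ α, L q α β * L q α β' = if β = β' then normSq q else 0 := by
  rw [← leftMulMatrix_coe, ← star_mul_self, map_mul, leftMulMatrix_star, Matrix.mul_apply]
  rfl

/-- `innerCoeffs w α` is the coefficient vector of the real linear form `x ↦ (⟨w, x⟩)_α`, in the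
real coordinates `(i, γ) ↦ (x i)_γ` of `x ∈ ℍ^d`. -/
def innerCoeffs {d : ℕ} (w : Fin d → Quaternion ℝ) (α : Fin 4) : Fin d × Fin 4 → ℝ :=
  fun s => L (star (w s.1)) α s.2

lemma innerCoeffs_dotProduct {d : ℕ} (u w : Fin d → Quaternion ℝ) (α β : Fin 4) :
    innerCoeffs u α ⬝ᵥ innerCoeffs w β = L (∑ i, star (u i) * w i) α β := by
  simp only [dotProduct, innerCoeffs, Fintype.sum_prod_type, map_sum, map_mul, Matrix.sum_apply,
    Matrix.mul_apply, leftMulMatrix_star (w _), Matrix.transpose_apply]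

lemma sum_innerCoeffs_dotProduct_mul {d : ℕ} (u w : Fin d → Quaternion ℝ) (β β' : Fin 4) :
    ∑ α, (innerCoeffs u α ⬝ᵥ innerCoeffs w β) * (innerCoeffs u α ⬝ᵥ innerCoeffs w β')
      = if β = β' then normSq (∑ i, star (u i) * w i) else 0 := by
  simp only [innerCoeffs_dotProduct, sum_leftMulMatrix_mul_leftMulMatrix]

lemma innerCoeffs_dotProduct_self {d : ℕ} (w : Fin d → Quaternion ℝ) (β β' : Fin 4) :
    innerCoeffs w β ⬝ᵥ innerCoeffs w β' = if β = β' then ∑ i, normSq (w i) else 0 := by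
  rw [innerCoeffs_dotProduct, ← leftMulMatrix_coe]
  simp only [star_mul_self, ← algebraMap_def, map_sum]

end Quaternion

-- `innerPoly w t` is `x ↦ |⟨w, x⟩|^{2t}` and `normPoly d t` is `x ↦ ‖x‖^{2t}`.
def innerPoly {d : ℕ} (w : Fin d → Quaternion ℝ) (t : ℕ) : MvPolynomial (Fin d × Fin 4) ℝ :=
  sumSqLinearForms (innerCoeffs w) ^ t

def normPoly (d t : ℕ) : MvPolynomial (Fin d × Fin 4) ℝ :=
  sumSqLinearForms (fun s : Fin d × Fin 4 => (Pi.single s 1 : Fin d × Fin 4 → ℝ)) ^ t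

lemma fischer_innerPoly_innerPoly {d : ℕ} (u w : Fin d → Quaternion ℝ) (t : ℕ) :
    fischer (innerPoly u t) (innerPoly w t)
      = normSq (∑ i, star (u i) * w i) ^ t * fischerConst 4 t := by
  rw [innerPoly, innerPoly, fischer_sumSqLinearForms_pow (sum_innerCoeffs_dotProduct_mul u w),
    Fintype.card_fin]

lemma fischer_normPoly_innerPoly {d : ℕ} (w : Fin d → Quaternion ℝ) (t : ℕ) :
    fischer (normPoly d t) (innerPoly w t) = (∑ i, normSq (w i)) ^ t * fischerConst 4 t := by
  rw [normPoly, innerPoly, fischer_sumSqLinearForms_pow fun β β' => by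
    rw [sum_single_dotProduct_mul, innerCoeffs_dotProduct_self], Fintype.card_fin]

lemma fischer_normPoly_normPoly (d t : ℕ) :
    fischer (normPoly d t) (normPoly d t) = fischerConst (4 * d) t := by
  rw [normPoly, fischer_sumSqLinearForms_pow (ρ := 1) fun s s' => by
    rw [sum_single_dotProduct_mul, single_one_dotProduct, Pi.single_apply],
    one_pow, one_mul, Fintype.card_prod, Fintype.card_fin, Fintype.card_fin, mul_comm]

theorem statement8_general (d t n : ℕ) (hd : 1 ≤ d)
    (v : Fin n → (Fin d → Quaternion ℝ)) :
    (∑ j, ∑ k, (normSq (∑ i, star (v j i) * v k i)) ^ t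
        = ((t + 1 : ℝ) / (Nat.choose (2 * d + t - 1) t : ℝ))
          * (∑ ℓ, (∑ i, normSq (v ℓ i)) ^ t) ^ 2)
      ↔ (∀ x : Fin d → Quaternion ℝ,
          ∑ j, (normSq (∑ i, star (v j i) * x i)) ^ t
            = ((t + 1 : ℝ) / (Nat.choose (2 * d + t - 1) t : ℝ))
              * (∑ ℓ, (∑ i, normSq (v ℓ i)) ^ t) * (∑ i, normSq (x i)) ^ t) := by
  set c := ((t + 1 : ℝ) / (Nat.choose (2 * d + t - 1) t : ℝ)) with hc
  set S := ∑ ℓ, (∑ i, normSq (v ℓ i)) ^ t with hS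
  have hcN : c * fischerConst (4 * d) t = fischerConst 4 t := by
    have hchoose : (0 : ℝ) < (2 * d + t - 1).choose t := by
      exact_mod_cast Nat.choose_pos (by omega)
    rw [hc, div_mul_eq_mul_div, choose_mul_fischerConst hd, mul_div_cancel_left₀ _ hchoose.ne']
  constructor
  · intro h x
    set F := ∑ j, innerPoly (v j) t
    have hNF : fischer (normPoly d t) F = S * fischerConst 4 t := by
      simp only [F, map_sum, fischer_normPoly_innerPoly, ← Finset.sum_mul, hS]
    have hFF : fischer F F = fischerConst 4 t * (c * S ^ 2) := by
      simp only [F, map_sum, LinearMap.sum_apply, fischer_innerPoly_innerPoly, ← Finset.sum_mul]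
      rw [Finset.sum_comm, h]
      ring
    have key := fischer.apply_mul_apply_eq_of_sq_eq fischer_self_nonneg fischer_isSymm
      (x := normPoly d t) (y := F) (by
        rw [hNF, hFF, fischer_normPoly_normPoly]
        linear_combination (-(fischerConst 4 t * S ^ 2)) * hcN) (innerPoly x t)
    simp only [F, fischer_normPoly_normPoly, hNF, fischer_normPoly_innerPoly, map_sum,
      LinearMap.sum_apply, fischer_innerPoly_innerPoly, ← Finset.sum_mul] at key
    have hβ := fischerConst_pos (m := 4 * d) (by omega) t
    have hκ := fischerConst_pos (m := 4) (by omega) t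
    apply mul_left_cancel₀ (mul_pos hβ hκ).ne'
    linear_combination key - (fischerConst 4 t * S * (∑ i, normSq (x i)) ^ t) * hcN
  · intro h
    rw [Finset.sum_comm]
    simp only [h, ← Finset.mul_sum, ← hS]
    ring

/-- Equality in the quaternionic Welch–Sidelnikov inequality holds if and only if the
generalized Bessel identity holds. -/
theorem statement8 (d t n : ℕ) (hd : 1 ≤ d) (ht : 1 ≤ t) (hn : 1 ≤ n)
    (v : Fin n → (Fin d → Quaternion ℝ)) (hv : v ≠ 0) :
    (∑ j, ∑ k, (normSq (∑ i, star (v j i) * v k i)) ^ t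
        = ((t + 1 : ℝ) / (Nat.choose (2 * d + t - 1) t : ℝ))
          * (∑ ℓ, (∑ i, normSq (v ℓ i)) ^ t) ^ 2)
      ↔ (∀ x : Fin d → Quaternion ℝ,
          ∑ j, (normSq (∑ i, star (v j i) * x i)) ^ t
            = ((t + 1 : ℝ) / (Nat.choose (2 * d + t - 1) t : ℝ))
              * (∑ ℓ, (∑ i, normSq (v ℓ i)) ^ t) * (∑ i, normSq (x i)) ^ t) :=
  statement8_general d t n hd v
end
end

section
/- Let d ≥ 1. The real span of the set of functions { (fun q : Fin d → ℍ => normSq( ∑_a star(v a) * (q a) )) : v ∈ Fin d → ℍ }, as a subspace of the real vector space of functions (Fin d → ℍ) → ℝ, is finite-dimensional of dimension d·(2d − 1). -/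
/-!
Expanding `|∑ₐ v̄ₐ qₐ|²` over ordered pairs `(a, b)` and grouping each off-diagonal term with
its conjugate shows that every generator is a combination of the diagonal moduli `|qₐ|²` and
the cross terms `Re (qₐ q̄_b u)` for `a < b`, which depend `ℝ`-linearly on `u ∈ ℍ`. Conversely
both kinds of functions lie in the span, taking `v = eₐ` and `v = eₐ + e_b u`. So the span is
the image of the linear map `(α, β) ↦ ∑ₐ αₐ |qₐ|² + ∑_{a<b} Re (qₐ q̄_b β_{ab})` on
`ℝ^d × ℍ^{d choose 2}`, and this map is injective: evaluating at `eₐ` recovers `αₐ`, and then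
evaluating at `eₐ + e_b β_{ab}` recovers `|β_{ab}|²`. Hence the dimension is
`d + 4 · (d choose 2) = d (2d - 1)`.
-/

open Quaternion Finset

theorem Fintype.sum_prod_eq_sum_diag_add_sum_lt {ι M : Type*} [Fintype ι] [LinearOrder ι]
    [AddCommMonoid M] (F : ι × ι → M) :
    ∑ p, F p = ∑ i, F (i, i) + ∑ p : {p : ι × ι // p.1 < p.2}, (F p.1 + F p.1.swap) := by
  have hswap : ∑ p : {p : ι × ι // p.1 < p.2}, F p.1.swap = ∑ p : {p : ι × ι // p.2 < p.1}, F p.1 :=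
    Fintype.sum_equiv ((Equiv.prodComm ι ι).subtypeEquiv (q := fun p => p.2 < p.1) fun _ => Iff.rfl)
      (fun p => F p.1.swap) (fun p => F p.1) fun _ => rfl
  have hdiag : ∑ i, F (i, i) = ∑ p : ι × ι, if p.1 = p.2 then F p else 0 := by
    simp [Fintype.sum_prod_type]
  rw [sum_add_distrib, hswap, hdiag,
    ← Finset.sum_subtype (univ.filter fun p : ι × ι => p.1 < p.2) (by simp) F,
    ← Finset.sum_subtype (univ.filter fun p : ι × ι => p.2 < p.1) (by simp) F,
    sum_filter, sum_filter, ← sum_add_distrib, ← sum_add_distrib]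
  refine Finset.sum_congr rfl fun p _ => ?_
  rcases lt_trichotomy p.1 p.2 with h | h | h
  · simp [h, h.ne, h.not_gt]
  · simp [h]
  · simp [h, h.ne', h.not_gt]

theorem Fintype.card_mul_self_eq_add_two_mul_card_lt (ι : Type*) [Fintype ι] [LinearOrder ι] :
    card ι * card ι = card ι + 2 * card {p : ι × ι // p.1 < p.2} := by
  have := Fintype.sum_prod_eq_sum_diag_add_sum_lt fun _ : ι × ι => (1 : ℕ)
  simp only [sum_const, card_univ, Fintype.card_prod, smul_eq_mul, mul_one] at this
  omega

section CommRing

variable {R : Type*} [CommRing R] {ι : Type*} [Fintype ι] [LinearOrder ι]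

theorem Quaternion.re_sum {κ : Type*} (s : Finset κ) (f : κ → ℍ[R]) :
    (∑ i ∈ s, f i).re = ∑ i ∈ s, (f i).re :=
  map_sum (QuaternionAlgebra.reₗ _ _ _) f s

theorem Quaternion.re_mul_comm (a b : ℍ[R]) : (a * b).re = (b * a).re := by
  simp only [re_mul]
  ring

theorem Quaternion.normSq_sum (w : ι → ℍ[R]) :
    normSq (∑ a, w a) =
      ∑ a, normSq (w a) + ∑ p : {p : ι × ι // p.1 < p.2}, 2 * (w p.1.1 * star (w p.1.2)).re := by
  rw [normSq_def, star_sum, sum_mul_sum, ← Fintype.sum_prod_type', re_sum,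
    Fintype.sum_prod_eq_sum_diag_add_sum_lt]
  congr 1
  refine Finset.sum_congr rfl fun p _ => ?_
  rw [Prod.fst_swap, Prod.snd_swap, ← star_star (w p.1.1), ← star_mul, star_star, re_star, two_mul]

theorem Quaternion.normSq_sum_star_mul (v q : ι → ℍ[R]) :
    normSq (∑ a, star (v a) * q a) =
      ∑ a, normSq (v a) * normSq (q a) + ∑ p : {p : ι × ι // p.1 < p.2},
        (q p.1.1 * star (q p.1.2) * ((2 : R) • (v p.1.2 * star (v p.1.1)))).re := by
  rw [normSq_sum]
  congr 1
  · simp only [map_mul, normSq_star]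
  · refine Finset.sum_congr rfl fun p _ => ?_
    rw [mul_smul_comm, re_smul, smul_eq_mul, star_mul, star_star, mul_assoc, re_mul_comm]
    simp only [mul_assoc]

theorem Quaternion.sum_star_single_mul (a : ι) (x : ℍ[R]) (q : ι → ℍ[R]) :
    ∑ i, star ((Pi.single a x : ι → ℍ[R]) i) * q i = star x * q a := by
  simp [Pi.single_apply, apply_ite star]

variable (R ι) in
def squaredModuliSpan : Submodule R ((ι → ℍ[R]) → R) :=
  Submodule.span R {f | ∃ v : ι → ℍ[R], f = fun q => normSq (∑ a, star (v a) * q a)}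

variable (R ι) in
def formOfCoeffs : (ι → R) × ({p : ι × ι // p.1 < p.2} → ℍ[R]) →ₗ[R] (ι → ℍ[R]) → R where
  toFun c q := ∑ a, c.1 a * normSq (q a) + ∑ p, (q p.1.1 * star (q p.1.2) * c.2 p).re
  map_add' c c' := by
    ext q
    simp only [Prod.fst_add, Prod.snd_add, Pi.add_apply, add_mul, mul_add, re_add, sum_add_distrib]
    ring
  map_smul' r c := by
    ext q
    simp only [Prod.smul_fst, Prod.smul_snd, Pi.smul_apply, smul_eq_mul, mul_smul_comm, re_smul,
      mul_sum, mul_add, mul_assoc, RingHom.id_apply]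

theorem formOfCoeffs_apply_single (c : (ι → R) × ({p : ι × ι // p.1 < p.2} → ℍ[R])) (a : ι)
    (x : ℍ[R]) : formOfCoeffs R ι c (Pi.single a x) = c.1 a * normSq x := by
  have hcross (p : {p : ι × ι // p.1 < p.2}) :
      ((Pi.single a x : ι → ℍ[R]) p.1.1 * star ((Pi.single a x : ι → ℍ[R]) p.1.2) * c.2 p).re
        = 0 := by
    obtain ⟨⟨i, j⟩, hij⟩ := p
    rcases eq_or_ne i a with rfl | hi
    · simp [Pi.single_eq_of_ne hij.ne']
    · simp [Pi.single_eq_of_ne hi]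
  simp only [formOfCoeffs, LinearMap.coe_mk, AddHom.coe_mk]
  rw [Fintype.sum_eq_zero _ hcross, add_zero, Fintype.sum_eq_single a fun i hi => by simp [hi]]
  simp

theorem formOfCoeffs_apply_single_add_single (c : (ι → R) × ({p : ι × ι // p.1 < p.2} → ℍ[R]))
    {a b : ι} (hab : a < b) (x : ℍ[R]) :
    formOfCoeffs R ι c (Pi.single a 1 + Pi.single b x) =
      c.1 a + c.1 b * normSq x + (star x * c.2 ⟨(a, b), hab⟩).re := by
  set q : ι → ℍ[R] := Pi.single a 1 + Pi.single b x
  have hq (k : ι) (ha : k ≠ a) (hb : k ≠ b) : q k = 0 := by simp [q, ha, hb]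
  have hcross (p : {p : ι × ι // p.1 < p.2}) (hp : p ≠ ⟨(a, b), hab⟩) :
      (q p.1.1 * star (q p.1.2) * c.2 p).re = 0 := by
    obtain ⟨⟨i, j⟩, hij⟩ := p
    dsimp only at hij ⊢
    have hzero : q i = 0 ∨ q j = 0 := by
      rcases eq_or_ne i a with rfl | hia
      · exact .inr (hq j hij.ne' fun hjb => hp (by subst hjb; rfl))
      rcases eq_or_ne i b with rfl | hib
      · exact .inr (hq j (hab.trans hij).ne' hij.ne')
      · exact .inl (hq i hia hib)
    rcases hzero with h | h <;> simp [h]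
  simp only [formOfCoeffs, LinearMap.coe_mk, AddHom.coe_mk]
  rw [Fintype.sum_eq_single _ hcross, Fintype.sum_eq_add a b hab.ne fun i hi => by simp [q, hi]]
  simp [q, hab.ne, hab.ne']

end CommRing

section OrderedField

variable {R : Type*} [Field R] [LinearOrder R] [IsStrictOrderedRing R]
  {ι : Type*} [Fintype ι] [LinearOrder ι]

theorem formOfCoeffs_injective : Function.Injective (formOfCoeffs R ι) := by
  refine (injective_iff_map_eq_zero _).2 fun c hc => ?_
  have hdiag (a : ι) : c.1 a = 0 := by
    simpa [formOfCoeffs_apply_single] using congrFun hc (Pi.single a 1)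
  have hcross (p : {p : ι × ι // p.1 < p.2}) : c.2 p = 0 := by
    obtain ⟨⟨a, b⟩, hab⟩ := p
    dsimp only at hab
    have := congrFun hc (Pi.single a 1 + Pi.single b (c.2 ⟨(a, b), hab⟩))
    rw [formOfCoeffs_apply_single_add_single _ hab, hdiag, hdiag, star_mul_self] at this
    simpa using this
  exact Prod.ext (funext hdiag) (funext hcross)

theorem normSq_apply_mem_squaredModuliSpan (a : ι) :
    (fun q : ι → ℍ[R] => normSq (q a)) ∈ squaredModuliSpan R ι :=
  Submodule.subset_span ⟨Pi.single a 1, funext fun q => by rw [sum_star_single_mul]; simp⟩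

theorem re_mul_star_mul_mem_squaredModuliSpan (a b : ι) (u : ℍ[R]) :
    (fun q : ι → ℍ[R] => (q a * star (q b) * u).re) ∈ squaredModuliSpan R ι := by
  set v : ι → ℍ[R] := Pi.single a 1 + Pi.single b u
  have hv : (2 : R) • (fun q : ι → ℍ[R] => (q a * star (q b) * u).re) =
      (fun q => normSq (∑ i, star (v i) * q i)) - (fun q => normSq (q a)) -
        normSq u • fun q => normSq (q b) := by
    ext q
    simp only [v, Pi.add_apply, Pi.sub_apply, Pi.smul_apply, smul_eq_mul, star_add, add_mul,
      sum_add_distrib, sum_star_single_mul, star_one, one_mul, normSq_add, map_mul, normSq_star,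
      star_mul, star_star, mul_assoc]
    ring
  rw [← Submodule.smul_mem_iff _ (two_ne_zero (α := R)), hv]
  exact sub_mem (sub_mem (Submodule.subset_span ⟨v, rfl⟩) (normSq_apply_mem_squaredModuliSpan a))
    (Submodule.smul_mem _ _ (normSq_apply_mem_squaredModuliSpan b))

theorem range_formOfCoeffs : LinearMap.range (formOfCoeffs R ι) = squaredModuliSpan R ι := by
  refine le_antisymm ?_ (Submodule.span_le.2 ?_)
  · rintro _ ⟨c, rfl⟩
    have hc : formOfCoeffs R ι c = ∑ a, c.1 a • (fun q : ι → ℍ[R] => normSq (q a)) +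
        ∑ p : {p : ι × ι // p.1 < p.2}, fun q => (q p.1.1 * star (q p.1.2) * c.2 p).re := by
      ext q
      simp [formOfCoeffs, Finset.sum_apply]
    rw [hc]
    exact add_mem
      (sum_mem fun a _ => Submodule.smul_mem _ _ (normSq_apply_mem_squaredModuliSpan a))
      (sum_mem fun p _ => re_mul_star_mul_mem_squaredModuliSpan _ _ _)
  · rintro _ ⟨v, rfl⟩
    exact ⟨(fun a => normSq (v a), fun p => (2 : R) • (v p.1.2 * star (v p.1.1))),
      funext fun q => (normSq_sum_star_mul v q).symm⟩

instance : FiniteDimensional R (squaredModuliSpan R ι) :=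
  range_formOfCoeffs (R := R) (ι := ι) ▸ inferInstance

theorem finrank_squaredModuliSpan :
    Module.finrank R (squaredModuliSpan R ι) = Fintype.card ι * (2 * Fintype.card ι - 1) := by
  rw [← range_formOfCoeffs, LinearMap.finrank_range_of_inj formOfCoeffs_injective,
    Module.finrank_prod, Module.finrank_pi, Module.finrank_pi_fintype]
  simp only [Quaternion.finrank_eq_four, sum_const, card_univ, smul_eq_mul]
  have := Fintype.card_mul_self_eq_add_two_mul_card_lt ι
  rw [Nat.mul_sub_one, ← mul_assoc, mul_comm _ 2, mul_assoc]
  omega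

end OrderedField

theorem statement15_general (d : ℕ) :
    FiniteDimensional ℝ
      ↥(Submodule.span ℝ
        {f : (Fin d → Quaternion ℝ) → ℝ |
          ∃ v : Fin d → Quaternion ℝ, f = fun q => normSq (∑ a, star (v a) * q a)})
    ∧ Module.finrank ℝ
      ↥(Submodule.span ℝ
        {f : (Fin d → Quaternion ℝ) → ℝ |
          ∃ v : Fin d → Quaternion ℝ, f = fun q => normSq (∑ a, star (v a) * q a)})
      = d * (2 * d - 1) := by
  have hdim := finrank_squaredModuliSpan (R := ℝ) (ι := Fin d)
  rw [Fintype.card_fin] at hdim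
  exact ⟨inferInstanceAs (FiniteDimensional ℝ (squaredModuliSpan ℝ (Fin d))), hdim⟩

/-- The space `Hom_{ℍ^d}(1,1) = span_ℝ { |⟨v,·⟩|² : v ∈ ℍ^d }` of real-valued functions on
`ℍ^d` is finite-dimensional of dimension `d(2d-1)`. -/
theorem statement15 (d : ℕ) (hd : 1 ≤ d) :
    FiniteDimensional ℝ
      ↥(Submodule.span ℝ
        {f : (Fin d → Quaternion ℝ) → ℝ |
          ∃ v : Fin d → Quaternion ℝ, f = fun q => normSq (∑ a, star (v a) * q a)})
    ∧ Module.finrank ℝ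
      ↥(Submodule.span ℝ
        {f : (Fin d → Quaternion ℝ) → ℝ |
          ∃ v : Fin d → Quaternion ℝ, f = fun q => normSq (∑ a, star (v a) * q a)})
      = d * (2 * d - 1) :=
  statement15_general d
end

section
/- Let d ≥ 1, t ≥ 1 and v : Fin d → ℍ. Define f : (Fin d → ℍ) → ℝ by f(x) := ( normSq( ∑_a star(v a) * (x a) ) )^t, and define the Laplacian of f at x as Δf(x) := ∑_{a} ∑_{r=1}^{4} fderiv ℝ (fun y => fderiv ℝ f y (Pi.single a i_r)) x (Pi.single a i_r), where (i_1,i_2,i_3,i_4) = (1,i,j,k). Then for all x: Δf(x) = 2t(2t+2) · ( ∑_a normSq(v a) ) · ( normSq( ∑_a star(v a) * (x a) ) )^{t−1}. -/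
/-!
Write `L x = ∑ a, star (v a) * x a`, a real-linear map `ℍ^d → ℍ`, so that `f = (‖L ·‖²)^t`.
The second derivative of `f` at `x` along `w` is
`2t ‖L x‖^{2(t-1)} ‖L w‖² + 4t(t-1) ‖L x‖^{2(t-2)} ⟪L x, L w⟫²`.
Along `w = Pi.single a i_r` we get `L w = star (v a) * i_r`; for fixed `a` these four vectors are
orthogonal of norm `|v a|`, so summing over `r` turns `‖L w‖²` into `4 |v a|²` and, by Parseval,
`⟪L x, L w⟫²` into `|v a|² ‖L x‖²`. Summing over `a` gives `(8t + 4t(t-1)) ‖v‖² ‖L x‖^{2(t-1)}`.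
-/

open Quaternion RealInnerProductSpace

section NormSqPow

variable {E F : Type*} [NormedAddCommGroup E] [NormedSpace ℝ E]
  [NormedAddCommGroup F] [InnerProductSpace ℝ F] (L : E →L[ℝ] F) (t : ℕ)

theorem ContinuousLinearMap.hasFDerivAt_norm_sq_pow (y : E) :
    HasFDerivAt (fun y => (‖L y‖ ^ 2) ^ t)
      ((2 * t * (‖L y‖ ^ 2) ^ (t - 1)) • (innerSL ℝ (L y)).comp L) y :=
  (L.hasFDerivAt.norm_sq.pow t).congr_fderiv <| by
    ext w
    simp only [nsmul_eq_mul, smul_apply, comp_apply, coe_innerSL_apply, Nat.cast_ofNat,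
      smul_eq_mul]
    ring

theorem ContinuousLinearMap.fderiv_norm_sq_pow_apply (y w : E) :
    fderiv ℝ (fun y => (‖L y‖ ^ 2) ^ t) y w = 2 * t * (‖L y‖ ^ 2) ^ (t - 1) * ⟪L y, L w⟫ := by
  rw [(L.hasFDerivAt_norm_sq_pow t y).fderiv]
  rfl

theorem ContinuousLinearMap.fderiv_fderiv_norm_sq_pow_apply (x w : E) :
    fderiv ℝ (fun y => fderiv ℝ (fun y => (‖L y‖ ^ 2) ^ t) y w) x w =
      2 * t * (‖L x‖ ^ 2) ^ (t - 1) * ‖L w‖ ^ 2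
        + 4 * t * (t - 1 : ℕ) * (‖L x‖ ^ 2) ^ (t - 2) * ⟪L x, L w⟫ ^ 2 := by
  have hinner : HasFDerivAt (fun y => ⟪L y, L w⟫) ((innerSL ℝ (L w)).comp L) x :=
    ((innerSL ℝ (L w)).comp L).hasFDerivAt.congr_of_eventuallyEq <|
      .of_forall fun y => real_inner_comm _ _
  have hprod := ((L.hasFDerivAt_norm_sq_pow (t - 1) x).const_mul (2 * t : ℝ)).fun_mul hinner
  simp_rw [L.fderiv_norm_sq_pow_apply]
  rw [hprod.fderiv]
  simp only [Nat.sub_sub, Nat.reduceAdd, add_apply, smul_apply, comp_apply, coe_innerSL_apply,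
    inner_self_eq_norm_sq_to_K, Real.ringHom_apply, smul_eq_mul]
  ring

end NormSqPow

namespace Quaternion

def oneIJK : Fin 4 → ℍ := ![1, ⟨0, 1, 0, 0⟩, ⟨0, 0, 1, 0⟩, ⟨0, 0, 0, 1⟩]

theorem normSq_eq_norm_sq (q : ℍ) : normSq q = ‖q‖ ^ 2 := by
  rw [sq, normSq_eq_norm_mul_self]

theorem normSq_oneIJK (r : Fin 4) : normSq (oneIJK r) = 1 := by
  rw [normSq_def']
  fin_cases r <;> simp [oneIJK]

theorem sum_sq_inner_oneIJK (q : ℍ) : ∑ r, ⟪q, oneIJK r⟫ ^ 2 = normSq q := by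
  simp [Fin.sum_univ_four, oneIJK, inner_def, normSq_def']

theorem inner_mul_right_eq_inner_star_mul (p c q : ℍ) : ⟪p, c * q⟫ = ⟪star c * p, q⟫ := by
  simp only [inner_def, star_mul, re_mul, re_star, imI_star, imJ_star, imK_star,
    imI_mul, imJ_mul, imK_mul]
  ring

theorem sum_sq_inner_mul_oneIJK (p c : ℍ) :
    ∑ r, ⟪p, c * oneIJK r⟫ ^ 2 = normSq c * normSq p := by
  simp only [inner_mul_right_eq_inner_star_mul, sum_sq_inner_oneIJK, map_mul, normSq_star]

theorem sum_normSq_mul_oneIJK (c : ℍ) : ∑ r, normSq (c * oneIJK r) = 4 * normSq c := by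
  simp [normSq_oneIJK]

end Quaternion

noncomputable def quatInnerCLM {d : ℕ} (v : Fin d → ℍ) : (Fin d → ℍ) →L[ℝ] ℍ :=
  ∑ a, (ContinuousLinearMap.mul ℝ ℍ (star (v a))).comp (ContinuousLinearMap.proj a)

theorem quatInnerCLM_apply {d : ℕ} (v x : Fin d → ℍ) :
    quatInnerCLM v x = ∑ a, star (v a) * x a := by
  simp [quatInnerCLM]

theorem quatInnerCLM_single {d : ℕ} (v : Fin d → ℍ) (a : Fin d) (q : ℍ) :
    quatInnerCLM v (Pi.single a q) = star (v a) * q := by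
  simp [quatInnerCLM_apply, Pi.single_apply]

theorem statement17_general (d t : ℕ) (v : Fin d → Quaternion ℝ)
    (u : Fin 4 → Quaternion ℝ)
    (hu : u = ![1, ⟨0, 1, 0, 0⟩, ⟨0, 0, 1, 0⟩, ⟨0, 0, 0, 1⟩])
    (f : (Fin d → Quaternion ℝ) → ℝ)
    (hf : f = fun x => (normSq (∑ a, star (v a) * x a)) ^ t) :
    ∀ x : Fin d → Quaternion ℝ,
      ∑ a, ∑ r : Fin 4,
          fderiv ℝ (fun y : Fin d → Quaternion ℝ => fderiv ℝ f y (Pi.single a (u r))) x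
            (Pi.single a (u r))
        = (2 * t * (2 * t + 2) : ℝ) * (∑ a, normSq (v a))
            * (normSq (∑ a, star (v a) * x a)) ^ (t - 1) := by
  intro x
  obtain rfl : u = oneIJK := hu
  obtain rfl : f = fun y => (‖quatInnerCLM v y‖ ^ 2) ^ t := by
    rw [hf]
    simp only [quatInnerCLM_apply, normSq_eq_norm_sq]
  simp only [(quatInnerCLM v).fderiv_fderiv_norm_sq_pow_apply, quatInnerCLM_single]
  simp only [Finset.sum_add_distrib, ← Finset.mul_sum, sum_normSq_mul_oneIJK,
    sum_sq_inner_mul_oneIJK, normSq_star, ← Finset.sum_mul, ← normSq_eq_norm_sq,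
    quatInnerCLM_apply]
  generalize normSq (∑ a, star (v a) * x a) = N
  generalize ∑ a, normSq (v a) = S
  -- `N ^ (t - 2) * N = N ^ (t - 1)` fails for `t ≤ 1`, where the factor `t * (t - 1)` vanishes.
  rcases t with _ | _ | t <;> simp <;> ring

/-- The Laplacian of the plane wave `x ↦ |⟨v,x⟩|^{2t}` on `ℍ^d` equals
`2t(2t+2) ‖v‖² |⟨v,x⟩|^{2(t-1)}`. -/
theorem statement17 (d t : ℕ) (hd : 1 ≤ d) (ht : 1 ≤ t) (v : Fin d → Quaternion ℝ)
    (u : Fin 4 → Quaternion ℝ)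
    (hu : u = ![1, ⟨0, 1, 0, 0⟩, ⟨0, 0, 1, 0⟩, ⟨0, 0, 0, 1⟩])
    (f : (Fin d → Quaternion ℝ) → ℝ)
    (hf : f = fun x => (normSq (∑ a, star (v a) * x a)) ^ t) :
    ∀ x : Fin d → Quaternion ℝ,
      ∑ a, ∑ r : Fin 4,
          fderiv ℝ (fun y : Fin d → Quaternion ℝ => fderiv ℝ f y (Pi.single a (u r))) x
            (Pi.single a (u r))
        = (2 * t * (2 * t + 2) : ℝ) * (∑ a, normSq (v a))
            * (normSq (∑ a, star (v a) * x a)) ^ (t - 1) :=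
  statement17_general d t v u hu f hf
end
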